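/- Let S ⊆ ℝⁿ be compact, f : S → ℝ lower semi-continuous with convex envelope f̂ : conv(S) → ℝ. Then every extreme point of epi(f̂) belongs to epi(f); in particular if (x, f̂(x)) is an extreme point of epi(f̂) then x ∈ S and f(x) = f̂(x). -/

import Mathlib

/-!
By Carathéodory, every point of `conv (epi f)` is `(∑ wᵢ xᵢ, t)` with `w` in the standard simplex
of a fixed dimension, `xᵢ ∈ S` and `∑ wᵢ f(xᵢ) ≤ t`. The weighted sum `(w, x) ↦ ∑ wᵢ f(xᵢ)` is lower
semicontinuous on the compact set `Δ × Sᴺ` (also where weights vanish, since `wᵢ f(xᵢ)` is then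
eventually above any negative number), so `conv (epi f)` is the image of a closed set under a
proper map, hence closed. A point of `epi f̂` outside this closed convex set can be separated from
it by a hyperplane: a non-vertical one is the graph of a continuous affine minorant of `f` lying
above `f̂` at that point, contradicting maximality of `f̂`; a vertical one would separate a point of
`conv S` from `S`. So `epi f̂ = conv (epi f)`, whose extreme points lie in `epi f`.
-/

open Set Module Topology

/-- `g` is the convex envelope of `f` on `S`: the largest closed (lower semicontinuous)
convex function on `conv S` majorized by `f` on `S`. -/
def IsConvexEnvelopeOn {E : Type*} [NormedAddCommGroup E] [NormedSpace ℝ E]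
    (S : Set E) (f g : E → ℝ) : Prop :=
  ConvexOn ℝ (convexHull ℝ S) g ∧
  LowerSemicontinuousOn g (convexHull ℝ S) ∧
  (∀ x ∈ S, g x ≤ f x) ∧
  ∀ h : E → ℝ, ConvexOn ℝ (convexHull ℝ S) h → LowerSemicontinuousOn h (convexHull ℝ S) →
    (∀ x ∈ S, h x ≤ f x) → ∀ x ∈ convexHull ℝ S, h x ≤ g x

def epigraphOn {E : Type*} (s : Set E) (f : E → ℝ) : Set (E × ℝ) :=
  {p | p.1 ∈ s ∧ f p.1 ≤ p.2}

theorem exists_stdSimplex_sum_smul_eq_of_mem_convexHull {W : Type*} [AddCommGroup W]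
    [Module ℝ W] [FiniteDimensional ℝ W] {A : Set W} {p : W} (hp : p ∈ convexHull ℝ A) :
    ∃ w ∈ stdSimplex ℝ (Fin (finrank ℝ W + 1)), ∃ z : Fin (finrank ℝ W + 1) → W,
      (∀ i, z i ∈ A) ∧ ∑ i, w i • z i = p := by
  obtain ⟨ι, _, z, w, hzA, hz, hw0, hw1, hwz⟩ := eq_pos_convex_span_of_mem_convexHull hp
  obtain ⟨e⟩ : Nonempty (ι ↪ Fin (finrank ℝ W + 1)) :=
    Function.Embedding.nonempty_of_card_le <| by
      simpa using hz.card_le_finrank_succ.trans (Nat.succ_le_succ (Submodule.finrank_le _))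
  obtain ⟨i₀⟩ : Nonempty ι := by
    by_contra h
    simp [not_nonempty_iff.1 h] at hw1
  have hw' : ∀ j ∉ range e, Function.extend e w 0 j = 0 := fun j hj =>
    Function.extend_apply' _ _ _ hj
  refine ⟨Function.extend e w 0, ⟨fun j => ?_, ?_⟩, Function.extend e z fun _ => z i₀,
    fun j => ?_, ?_⟩
  · by_cases hj : j ∈ range e
    · obtain ⟨i, rfl⟩ := hj
      simpa [e.injective.extend_apply] using (hw0 i).le
    · simp [hw' j hj]
  · rw [← hw1]
    exact (Fintype.sum_of_injective e e.injective _ _ hw'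
      fun i => (e.injective.extend_apply _ _ _).symm).symm
  · by_cases hj : j ∈ range e
    · obtain ⟨i, rfl⟩ := hj
      simpa [e.injective.extend_apply] using hzA (mem_range_self i)
    · simpa [Function.extend_apply' _ _ _ hj] using hzA (mem_range_self i₀)
  · rw [← hwz]
    refine (Fintype.sum_of_injective e e.injective _ _ (fun j hj => ?_) fun i => ?_).symm
    · simp [hw' j hj]
    · simp [e.injective.extend_apply]

theorem convexHull_epigraphOn_eq {V : Type*} [AddCommGroup V] [Module ℝ V]
    [FiniteDimensional ℝ V] (S : Set V) (f : V → ℝ) :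
    convexHull ℝ (epigraphOn S f) = {p | ∃ w ∈ stdSimplex ℝ (Fin (finrank ℝ (V × ℝ) + 1)),
      ∃ x : Fin (finrank ℝ (V × ℝ) + 1) → V,
        (∀ i, x i ∈ S) ∧ ∑ i, w i • x i = p.1 ∧ ∑ i, w i * f (x i) ≤ p.2} := by
  ext p
  constructor
  · intro hp
    obtain ⟨w, hw, z, hzA, rfl⟩ := exists_stdSimplex_sum_smul_eq_of_mem_convexHull hp
    refine ⟨w, hw, fun i => (z i).1, fun i => (hzA i).1, by simp [Prod.fst_sum], ?_⟩
    simpa [Prod.snd_sum] using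
      Finset.sum_le_sum fun i _ => mul_le_mul_of_nonneg_left (hzA i).2 (hw.1 i)
  · rintro ⟨w, hw, x, hxS, hx, hfx⟩
    set d := p.2 - ∑ i, w i * f (x i)
    have hp : p = ∑ i, w i • (x i, f (x i) + d) := by
      ext
      · simp [Prod.fst_sum, hx]
      · simp only [Prod.snd_sum, Prod.smul_snd, smul_eq_mul, mul_add, Finset.sum_add_distrib,
          ← Finset.sum_mul, hw.2, d]
        ring
    rw [hp]
    exact (convex_convexHull ℝ _).sum_mem (fun i _ => hw.1 i) hw.2
      fun i _ => subset_convexHull ℝ _ ⟨hxS i, by simp [d, hfx]⟩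

theorem LowerSemicontinuousOn.fst_mul_comp_snd {X : Type*} [TopologicalSpace X] {f : X → ℝ}
    {s : Set X} (hf : LowerSemicontinuousOn f s) :
    LowerSemicontinuousOn (fun p : ℝ × X => p.1 * f p.2) (Ici 0 ×ˢ s) := by
  rintro ⟨c, x⟩ ⟨hc, hx⟩ y hy
  obtain ⟨y', hy'f, hy'⟩ : ∃ y' < f x, y < c * y' :=
    ((continuous_const_mul c).tendsto (f x)).eventually (lt_mem_nhds hy) |>.exists_lt
  have hfst : ∀ᶠ p : ℝ × X in 𝓝[Ici 0 ×ˢ s] (c, x), y < p.1 * y' :=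
    nhdsWithin_le_nhds <| ((continuous_fst.mul continuous_const).tendsto (c, x)).eventually
      (lt_mem_nhds hy')
  have hsnd : ∀ᶠ p : ℝ × X in 𝓝[Ici 0 ×ˢ s] (c, x), y' < f p.2 :=
    (continuous_snd.continuousWithinAt.tendsto_nhdsWithin (x := (c, x))
      fun _ hp => hp.2).eventually (hf x hx y' hy'f)
  filter_upwards [hfst, hsnd, self_mem_nhdsWithin] with p h₁ h₂ h₃
  exact h₁.trans_le (mul_le_mul_of_nonneg_left h₂.le h₃.1)

theorem LowerSemicontinuousOn.sum_mul_comp {X ι : Type*} [TopologicalSpace X] [Fintype ι]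
    {f : X → ℝ} {s : Set X} (hf : LowerSemicontinuousOn f s) :
    LowerSemicontinuousOn (fun q : (ι → ℝ) × (ι → X) => ∑ i, q.1 i * f (q.2 i))
      (stdSimplex ℝ ι ×ˢ univ.pi fun _ => s) :=
  lowerSemicontinuousOn_sum fun i _ => hf.fst_mul_comp_snd.comp
    (g := fun q : (ι → ℝ) × (ι → X) => (q.1 i, q.2 i)) (by fun_prop)
    fun _ hq => ⟨hq.1.1 i, hq.2 i (mem_univ i)⟩

theorem IsCompact.isClosed_convexHull_epigraphOn {V : Type*} [NormedAddCommGroup V]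
    [NormedSpace ℝ V] [FiniteDimensional ℝ V] {S : Set V} {f : V → ℝ} (hS : IsCompact S)
    (hf : LowerSemicontinuousOn f S) : IsClosed (convexHull ℝ (epigraphOn S f)) := by
  let N := finrank ℝ (V × ℝ) + 1
  let K := stdSimplex ℝ (Fin N) ×ˢ univ.pi fun _ : Fin N => S
  have : CompactSpace K := isCompact_iff_compactSpace.1 <|
    (isCompact_stdSimplex ℝ _).prod (isCompact_univ_pi fun _ => hS)
  let F : K → ℝ := K.domRestrict fun q => ∑ i, q.1 i * f (q.2 i)
  let φ : K × ℝ → V × ℝ := Prod.map (fun q : K => ∑ i, q.val.1 i • q.val.2 i) id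
  have hφ : IsProperMap φ := (Continuous.isProperMap (by fun_prop)).prodMap isProperMap_id
  have hF : LowerSemicontinuous F := lowerSemicontinuous_restrict_iff.2 hf.sum_mul_comp
  have hEq : convexHull ℝ (epigraphOn S f) = φ '' {q | F q.1 ≤ q.2} := by
    rw [convexHull_epigraphOn_eq]
    ext ⟨y, t⟩
    constructor
    · rintro ⟨w, hw, x, hxS, hx, hfx⟩
      exact ⟨(⟨(w, x), hw, fun i _ => hxS i⟩, t), hfx, by simpa [φ] using hx⟩
    · rintro ⟨⟨⟨⟨w, x⟩, hw, hxS⟩, t⟩, hfx, hq⟩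
      simp only [φ, Prod.map, Prod.mk.injEq] at hq
      exact ⟨w, hw, x, fun i => hxS i (mem_univ i), hq.1, hq.2 ▸ hfx⟩
  rw [hEq]
  exact hφ.isClosedMap _ hF.isClosed_epigraph

namespace IsConvexEnvelopeOn

variable {V : Type*} [NormedAddCommGroup V] [NormedSpace ℝ V] {S : Set V} {f g : V → ℝ}

theorem convexHull_epigraphOn_subset (hg : IsConvexEnvelopeOn S f g) :
    convexHull ℝ (epigraphOn S f) ⊆ epigraphOn (convexHull ℝ S) g :=
  convexHull_min (fun _ hp => ⟨subset_convexHull ℝ S hp.1, (hg.2.2.1 _ hp.1).trans hp.2⟩)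
    hg.1.convex_epigraph

theorem epigraphOn_subset_convexHull (hg : IsConvexEnvelopeOn S f g)
    (hC : IsClosed (convexHull ℝ (epigraphOn S f))) :
    epigraphOn (convexHull ℝ S) g ⊆ convexHull ℝ (epigraphOn S f) := by
  rintro ⟨x, t⟩ ⟨hx, hgt⟩
  by_contra hxt
  obtain ⟨ℓ, u, hℓx, hℓC⟩ := geometric_hahn_banach_point_closed (convex_convexHull ℝ _) hC hxt
  set ℓ₀ := ℓ.comp (ContinuousLinearMap.inl ℝ V ℝ)
  set b := ℓ (0, 1)
  have hℓ : ∀ y s, ℓ (y, s) = ℓ₀ y + s * b := fun y s => by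
    rw [show (y, s) = (y, 0) + s • ((0 : V), (1 : ℝ)) by simp, map_add, map_smul]
    rfl
  have hA : ∀ y ∈ S, ∀ s, f y ≤ s → u < ℓ₀ y + s * b := fun y hy s hs =>
    hℓ y s ▸ hℓC _ (subset_convexHull ℝ _ ⟨hy, hs⟩)
  rcases le_or_gt b 0 with hb | hb
  · have hS : S ⊆ {y | u - t * b < ℓ₀ y} := fun y hy => by
      have h₁ := hA y hy (max (f y) t) (le_max_left _ _)
      have h₂ : max (f y) t * b ≤ t * b := mul_le_mul_of_nonpos_right (le_max_right _ _) hb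
      change u - t * b < ℓ₀ y
      linarith
    have := convexHull_min hS (convex_halfSpace_gt ℓ₀.isLinear _) hx
    change u - t * b < ℓ₀ x at this
    linarith [hℓ x t]
  · set α : V → ℝ := fun y => (u - ℓ₀ y) / b
    have hα_conv : ConvexOn ℝ (convexHull ℝ S) α := by
      refine ⟨convex_convexHull ℝ S, fun y _ z _ a c _ _ hac => le_of_eq ?_⟩
      simp only [α, map_add, map_smul, smul_eq_mul]
      field_simp
      linear_combination -u * hac
    have hα_lsc : LowerSemicontinuousOn α (convexHull ℝ S) :=
      ((continuous_const.sub ℓ₀.continuous).div_const b).lowerSemicontinuous.lowerSemicontinuousOn _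
    have hαf : ∀ y ∈ S, α y ≤ f y := fun y hy => by
      rw [div_le_iff₀ hb]
      linarith [hA y hy (f y) le_rfl]
    have := hg.2.2.2 α hα_conv hα_lsc hαf x hx
    rw [div_le_iff₀ hb] at this
    linarith [hℓ x t, mul_le_mul_of_nonneg_right hgt hb.le]

theorem epigraphOn_eq_convexHull (hg : IsConvexEnvelopeOn S f g)
    (hC : IsClosed (convexHull ℝ (epigraphOn S f))) :
    epigraphOn (convexHull ℝ S) g = convexHull ℝ (epigraphOn S f) :=
  (hg.epigraphOn_subset_convexHull hC).antisymm hg.convexHull_epigraphOn_subset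

end IsConvexEnvelopeOn

/-- every extreme point of `epi f̂` belongs to `epi f`; in particular, if
`(x, f̂ x)` is an extreme point of `epi f̂`, then `x ∈ S` and `f x = f̂ x`. -/
theorem extremePoints_epigraph_envelope_subset (n : ℕ) (S : Set (Fin n → ℝ))
    (f g : (Fin n → ℝ) → ℝ) (hScomp : IsCompact S)
    (hf : LowerSemicontinuousOn f S) (hg : IsConvexEnvelopeOn S f g) :
    (∀ p ∈ Set.extremePoints ℝ
        {p : (Fin n → ℝ) × ℝ | p.1 ∈ convexHull ℝ S ∧ g p.1 ≤ p.2},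
      p.1 ∈ S ∧ f p.1 ≤ p.2) ∧
    ∀ x : Fin n → ℝ, (x, g x) ∈ Set.extremePoints ℝ
        {p : (Fin n → ℝ) × ℝ | p.1 ∈ convexHull ℝ S ∧ g p.1 ≤ p.2} →
      x ∈ S ∧ f x = g x := by
  have hext : extremePoints ℝ (epigraphOn (convexHull ℝ S) g) ⊆ epigraphOn S f := by
    rw [hg.epigraphOn_eq_convexHull (hScomp.isClosed_convexHull_epigraphOn hf)]
    exact extremePoints_convexHull_subset
  refine ⟨hext, fun x hx => ?_⟩
  obtain ⟨hxS, hfx⟩ := hext hx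
  exact ⟨hxS, le_antisymm hfx (hg.2.2.1 x hxS)⟩
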